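/- arXiv:2301.09266 — 2 statements merged into one kernel-verified Lean document; each statement's English description precedes it below -/
import Mathlib

section
/- Define the anti-diagonal index of pixel (i,j) as d = i + j. For a TL-padded convolution with K_{k-1,k-1} = 1, the inverse value X_{i,j} is a function of Y_{i,j} and the values X_{i',j'} with i'+j' < i+j. In particular, any two pixels on the same anti-diagonal (i+j = i'+j', (i,j) ≠ (i',j')) have inverse values that do not depend on each other. -/
/-- TL-padded convolution of an `n × n` image with a `k × k` kernel. -/
def tlConv (n k : ℕ) (K : ℕ → ℕ → ℝ) (X : Fin n → Fin n → ℝ) (i j : Fin n) : ℝ :=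
  ∑ p ∈ Finset.range k, ∑ q ∈ Finset.range k,
    if p ≤ (i : ℕ) ∧ q ≤ (j : ℕ) then
      X ⟨(i : ℕ) - p, Nat.lt_of_le_of_lt (Nat.sub_le _ _) i.isLt⟩
        ⟨(j : ℕ) - q, Nat.lt_of_le_of_lt (Nat.sub_le _ _) j.isLt⟩ *
        K (k - 1 - p) (k - 1 - q)
    else 0

/-- The convolution matrix of the TL-padded convolution (row-major ordering). -/
def convMatrix (n k : ℕ) (K : ℕ → ℕ → ℝ) :
    Matrix (Fin n × Fin n) (Fin n × Fin n) ℝ := fun a b =>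
  if (b.1 : ℕ) ≤ (a.1 : ℕ) ∧ (b.2 : ℕ) ≤ (a.2 : ℕ) ∧
      (a.1 : ℕ) - (b.1 : ℕ) < k ∧ (a.2 : ℕ) - (b.2 : ℕ) < k then
    K (k - 1 - ((a.1 : ℕ) - (b.1 : ℕ))) (k - 1 - ((a.2 : ℕ) - (b.2 : ℕ)))
  else 0


/- Only the tap `(p, q) = (0, 0)` reads the pixel `(i, j)` itself; every other tap reads a pixel
on a strictly smaller anti-diagonal. Hence a perturbation of the image supported on anti-diagonals
`≥ i + j` changes `Y i j` by exactly `K (k-1) (k-1)` times its value at `(i, j)`, which pins that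
value down when the corner weight is `1`. Conversely a convolution-matrix entry is nonzero only for
`b ≤ a` componentwise, which on a single anti-diagonal forces `a = b`. -/

lemma tlConv_sub (n k : ℕ) (K : ℕ → ℕ → ℝ) (X X' : Fin n → Fin n → ℝ) (i j : Fin n) :
    tlConv n k K (X - X') i j = tlConv n k K X i j - tlConv n k K X' i j := by
  simp only [tlConv, ← Finset.sum_sub_distrib]
  refine Finset.sum_congr rfl fun p _ => Finset.sum_congr rfl fun q _ => ?_
  split_ifs <;> simp [sub_mul]

lemma tlConv_eq_mul_corner_of_eq_zero_of_add_lt (n k : ℕ) (hk : 0 < k) (K : ℕ → ℕ → ℝ)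
    (X : Fin n → Fin n → ℝ) (i j : Fin n)
    (hX : ∀ a b : Fin n, (a : ℕ) + (b : ℕ) < (i : ℕ) + (j : ℕ) → X a b = 0) :
    tlConv n k K X i j = X i j * K (k - 1) (k - 1) := by
  have h0 : (0, 0) ∈ Finset.range k ×ˢ Finset.range k := by simp [hk]
  rw [tlConv, ← Finset.sum_product', Finset.sum_eq_single_of_mem (0, 0) h0]
  · simp
  · rintro ⟨p, q⟩ - hpq
    rw [Ne, Prod.mk.injEq, not_and_or] at hpq
    split_ifs with hle
    · rw [hX _ _ (by dsimp only at hle ⊢; omega), zero_mul]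
    · rfl

lemma convMatrix_eq_zero_of_add_eq (n k : ℕ) (K : ℕ → ℕ → ℝ) (a b : Fin n × Fin n) (hab : a ≠ b)
    (hsum : (a.1 : ℕ) + (a.2 : ℕ) = (b.1 : ℕ) + (b.2 : ℕ)) :
    convMatrix n k K a b = 0 := by
  refine if_neg fun ⟨_, _, _⟩ => hab ?_
  exact Prod.ext (Fin.ext (by omega)) (Fin.ext (by omega))

/-- with `K (k-1) (k-1) = 1`, the inverse value `X i j` is a function of
`Y i j` and the values of `X` on pixels with strictly smaller anti-diagonal index
`i' + j' < i + j`; moreover two distinct pixels on the same anti-diagonal do not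
depend on each other (the corresponding coefficient in the convolution is zero). -/
theorem tlConv_antidiagonal_independence (n k : ℕ) (hk : 0 < k) (K : ℕ → ℕ → ℝ)
    (h1 : K (k - 1) (k - 1) = 1) :
    (∀ X X' : Fin n → Fin n → ℝ, ∀ i j : Fin n,
      (∀ a b : Fin n, (a : ℕ) + (b : ℕ) < (i : ℕ) + (j : ℕ) → X a b = X' a b) →
      tlConv n k K X i j = tlConv n k K X' i j → X i j = X' i j) ∧
    (∀ a b : Fin n × Fin n, a ≠ b →
      (a.1 : ℕ) + (a.2 : ℕ) = (b.1 : ℕ) + (b.2 : ℕ) →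
      convMatrix n k K a b = 0) := by
  refine ⟨fun X X' i j hX hY => ?_, convMatrix_eq_zero_of_add_eq n k K⟩
  have hdiff := tlConv_eq_mul_corner_of_eq_zero_of_add_lt n k hk K (X - X') i j
    fun a b hab => sub_eq_zero.mpr (hX a b hab)
  rw [tlConv_sub, hY, sub_self, h1, mul_one, Pi.sub_apply, Pi.sub_apply] at hdiff
  exact sub_eq_zero.mp hdiff.symm
end

section
/- For the TL-padded convolution recursion X_{i,j} = Y_{i,j} − Σ_{(p,q)≠(0,0)} X_{i-p,j-q} K_{k-1-p,k-1-q}, strong induction on the anti-diagonal d = i+j shows the solution X exists, is unique, and each X_{i,j} is a linear function of {Y_{i',j'} : i' ≤ i, j' ≤ j}. -/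
/-!
Order the pixels coordinatewise. The tap `p = q = 0` of `tlConv` contributes
`X i j * K (k-1) (k-1) = X i j`, and every other tap reads `X` at a pixel strictly below `(i, j)`,
so `tlConv` is unitriangular. Well-founded induction then shows that if `tlConv X` vanishes on a
lower set, so does `X`. On the whole grid this makes the linear map `tlConv` injective, hence
bijective; on the complement of `Set.Ici b` it shows that the preimage of the unit image at `b` is
supported on `Set.Ici b`, i.e. the matrix of the inverse is lower triangular.
-/

section

variable {n k : ℕ} {K : ℕ → ℕ → ℝ}

variable (n k K) in
def tlConvLinearMap : (Fin n → Fin n → ℝ) →ₗ[ℝ] Fin n → Fin n → ℝ where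
  toFun := tlConv n k K
  map_add' X Y := by
    ext i j
    simp only [tlConv, Pi.add_apply, add_mul, ← Finset.sum_add_distrib]
    refine Finset.sum_congr rfl fun p _ => Finset.sum_congr rfl fun q _ => ?_
    split_ifs <;> simp
  map_smul' c X := by
    ext i j
    simp only [tlConv, Pi.smul_apply, smul_eq_mul, Finset.mul_sum, RingHom.id_apply]
    refine Finset.sum_congr rfl fun p _ => Finset.sum_congr rfl fun q _ => ?_
    split_ifs <;> simp [mul_assoc]

theorem tlConv_apply_of_forall_lt_eq_zero (hk : 0 < k) (h1 : K (k - 1) (k - 1) = 1)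
    {X : Fin n → Fin n → ℝ} {a : Fin n × Fin n} (hX : ∀ i j, (i, j) < a → X i j = 0) :
    tlConv n k K X a.1 a.2 = X a.1 a.2 := by
  rw [tlConv, ← Finset.sum_product', Finset.sum_eq_single_of_mem (0, 0) (by simp [hk])]
  · simp [h1]
  rintro ⟨p, q⟩ - hpq
  split_ifs with h
  · rw [hX _ _ ?_, zero_mul]
    simp only [ne_eq, Prod.mk.injEq, not_and_or] at hpq
    simp only [Prod.lt_iff, Fin.lt_def, Fin.le_def]
    omega
  · rfl

theorem eq_zero_on_of_tlConv_eq_zero_on (hk : 0 < k) (h1 : K (k - 1) (k - 1) = 1)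
    {S : Set (Fin n × Fin n)} (hS : IsLowerSet S) {X : Fin n → Fin n → ℝ}
    (hX : ∀ a ∈ S, tlConv n k K X a.1 a.2 = 0) : ∀ a ∈ S, X a.1 a.2 = 0 := by
  intro a
  induction a using WellFoundedLT.induction with
  | _ a ih =>
    intro ha
    rw [← tlConv_apply_of_forall_lt_eq_zero hk h1 fun i j hb => ih (i, j) hb (hS hb.le ha),
      hX a ha]

theorem tlConv_bijective (hk : 0 < k) (h1 : K (k - 1) (k - 1) = 1) :
    Function.Bijective (tlConv n k K) := by
  have hinj : Function.Injective (tlConvLinearMap n k K) := by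
    rw [← LinearMap.ker_eq_bot, LinearMap.ker_eq_bot']
    intro X hX
    ext i j
    exact eq_zero_on_of_tlConv_eq_zero_on hk h1 isLowerSet_univ
      (fun a _ => congr_fun₂ hX a.1 a.2) (i, j) trivial
  exact ⟨hinj, LinearMap.injective_iff_surjective.mp hinj⟩

theorem le_of_tlConv_eq_single (hk : 0 < k) (h1 : K (k - 1) (k - 1) = 1)
    {X : Fin n → Fin n → ℝ} {a b : Fin n × Fin n}
    (hX : tlConv n k K X = Function.curry (Pi.single b 1)) (ha : X a.1 a.2 ≠ 0) : b ≤ a := by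
  by_contra hba
  refine ha (eq_zero_on_of_tlConv_eq_zero_on hk h1 (isUpperSet_Ici b).compl
    (fun a' ha' => ?_) a hba)
  rw [hX, Function.curry_apply, Pi.single_eq_of_ne]
  rintro rfl
  exact ha' (Set.mem_Ici.2 le_rfl)

end

/-- with `K (k-1) (k-1) = 1`, for every output `Y` the recursion has a
solution `X`, the solution is unique, and each `X i j` is a linear function of the
values `Y i' j'` with `i' ≤ i` and `j' ≤ j` (with coefficients independent of `Y`). -/
theorem tlConv_inverse_exists_unique_linear (n k : ℕ) (hk : 0 < k) (K : ℕ → ℕ → ℝ)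
    (h1 : K (k - 1) (k - 1) = 1) :
    (∀ Y : Fin n → Fin n → ℝ, ∃! X : Fin n → Fin n → ℝ, tlConv n k K X = Y) ∧
    (∃ c : (Fin n × Fin n) → (Fin n × Fin n) → ℝ,
      (∀ a b : Fin n × Fin n, c a b ≠ 0 → b.1 ≤ a.1 ∧ b.2 ≤ a.2) ∧
      ∀ Y : Fin n → Fin n → ℝ,
        tlConv n k K
          (fun i j => ∑ b : Fin n × Fin n, c (i, j) b * Y b.1 b.2) = Y) := by
  have hbij : Function.Bijective (tlConv n k K) := tlConv_bijective hk h1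
  refine ⟨hbij.existsUnique, ?_⟩
  let e := LinearEquiv.ofBijective (tlConvLinearMap n k K) hbij
  let curryₗ := LinearEquiv.curry ℝ ℝ (Fin n) (Fin n)
  let T := curryₗ.trans (e.symm.trans curryₗ.symm)
  refine ⟨LinearMap.toMatrix' T.toLinearMap, fun a b hab => ?_, fun Y => ?_⟩
  · exact Prod.mk_le_mk.mp (le_of_tlConv_eq_single hk h1 (e.apply_symm_apply _) hab)
  · change tlConv n k K
      (Function.curry ((LinearMap.toMatrix' T.toLinearMap).mulVec (Function.uncurry Y))) = Y
    rw [LinearMap.toMatrix'_mulVec]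
    exact e.apply_symm_apply Y
end
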